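/- arXiv:1912.07275 — 5 statements merged into one kernel-verified Lean document; each statement's English description precedes it below -/
import Mathlib

section
/- For every ξ > 0 and every real t, one has |χ(t − iξ)| ≤ χ(−iξ) · |χ(t)|, where χ(−iξ) = exp( d₁ r^d ∫₀¹ (e^{ξu/r^{d/2}} − 1 − ξu/r^{d/2}) u^{−1−d/γ} du ) is a positive real number. (Lemma 2.3(i).) -/
/-!
Write χ(z) = exp(c ∫₀¹ L(z,u) du) with c = d₁ r^d ≥ 0, so that |χ(z)| = exp(c ∫₀¹ Re L(z,u) du).
With a = ξu/ρ ≥ 0 and b = tu/ρ, the real part of the bracket in L(t − iξ, u) is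
e^a cos b − 1 − a = (e^a − 1 − a) + (cos b − 1) − (e^a − 1)(1 − cos b),
and the last product is nonnegative. Integrating against u^{−1−d/γ} du and exponentiating splits
the bound into χ(−iξ)·|χ(t)|. The integrals converge since |e^w − 1 − w| ≤ |w|² e^{|w|}.
-/

open MeasureTheory

noncomputable section

/-- ρ = r^{d/2} -/
def rho (d : ℕ) (r : ℝ) : ℝ := r ^ ((d : ℝ) / 2)

/-- χ(z) = exp( d₁ r^d ∫₀¹ (e^{izu/r^{d/2}} − 1 − izu/r^{d/2}) u^{−1−d/γ} du ) -/
def chiC (d : ℕ) (γ r : ℝ) (z : ℂ) : ℂ :=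
  Complex.exp ((((2 - (d : ℝ) / γ) * r ^ d : ℝ) : ℂ) *
    ∫ u in (0:ℝ)..1,
      (Complex.exp (Complex.I * z * (u : ℂ) / ((rho d r : ℝ) : ℂ)) - 1 -
          Complex.I * z * (u : ℂ) / ((rho d r : ℝ) : ℂ)) *
        ((u ^ (-1 - (d : ℝ) / γ) : ℝ) : ℂ))

def levyIntegrand (α ρ : ℝ) (z : ℂ) (u : ℝ) : ℂ :=
  (Complex.exp (Complex.I * z * u / ρ) - 1 - Complex.I * z * u / ρ) * ((u ^ (-1 - α) : ℝ) : ℂ)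

lemma chiC_eq_exp_integral (d : ℕ) (γ r : ℝ) (z : ℂ) :
    chiC d γ r z = Complex.exp ((((2 - (d : ℝ) / γ) * r ^ d : ℝ) : ℂ) *
      ∫ u in (0 : ℝ)..1, levyIntegrand (d / γ) (rho d r) z u) :=
  rfl

lemma Complex.norm_exp_sub_one_sub_self_le (w : ℂ) :
    ‖Complex.exp w - 1 - w‖ ≤ ‖w‖ ^ 2 * Real.exp ‖w‖ := by
  simpa [Finset.sum_range_succ, sub_sub] using Complex.norm_exp_sub_sum_le_norm_mul_exp w 2

lemma norm_levyIntegrand_le (α ρ : ℝ) (z : ℂ) {u : ℝ} (hu₀ : 0 < u) (hu₁ : u ≤ 1) :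
    ‖levyIntegrand α ρ z u‖ ≤ (‖z‖ / |ρ|) ^ 2 * Real.exp (‖z‖ / |ρ|) * u ^ (1 - α) := by
  set K := ‖z‖ / |ρ|
  set w := Complex.I * z * u / ρ
  have hK : 0 ≤ K := by positivity
  have hw : ‖w‖ = K * u := by
    simp only [w, K, norm_div, norm_mul, Complex.norm_I, Complex.norm_real, Real.norm_eq_abs,
      abs_of_pos hu₀]
    ring
  have hexp : ‖Complex.exp w - 1 - w‖ ≤ K ^ 2 * Real.exp K * u ^ 2 :=
    calc ‖Complex.exp w - 1 - w‖ ≤ (K * u) ^ 2 * Real.exp (K * u) :=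
          hw ▸ Complex.norm_exp_sub_one_sub_self_le w
      _ ≤ (K * u) ^ 2 * Real.exp K := by
          gcongr; exact mul_le_of_le_one_right hK hu₁
      _ = K ^ 2 * Real.exp K * u ^ 2 := by ring
  have hpow : u ^ 2 * u ^ (-1 - α) = u ^ (1 - α) := by
    rw [← Real.rpow_natCast, ← Real.rpow_add hu₀]
    congr 1
    push_cast
    ring
  calc ‖levyIntegrand α ρ z u‖ = ‖Complex.exp w - 1 - w‖ * u ^ (-1 - α) := by
        rw [levyIntegrand, norm_mul, Complex.norm_real, Real.norm_of_nonneg (by positivity)]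
    _ ≤ K ^ 2 * Real.exp K * u ^ 2 * u ^ (-1 - α) := by gcongr
    _ = K ^ 2 * Real.exp K * u ^ (1 - α) := by rw [mul_assoc, hpow]

lemma intervalIntegrable_levyIntegrand {α : ℝ} (hα : α < 2) (ρ : ℝ) (z : ℂ) :
    IntervalIntegrable (levyIntegrand α ρ z) volume 0 1 := by
  refine IntervalIntegrable.mono_fun'
    ((intervalIntegral.intervalIntegrable_rpow' (by linarith : -1 < 1 - α)).const_mul
      ((‖z‖ / |ρ|) ^ 2 * Real.exp (‖z‖ / |ρ|)))
    (by unfold levyIntegrand; fun_prop) ?_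
  rw [Set.uIoc_of_le zero_le_one, Filter.EventuallyLE, ae_restrict_iff' measurableSet_Ioc]
  exact Filter.Eventually.of_forall fun u hu => norm_levyIntegrand_le α ρ z hu.1 hu.2

lemma re_levyIntegrand (α ρ : ℝ) (z : ℂ) (u : ℝ) :
    (levyIntegrand α ρ z u).re =
      (Real.exp (-z.im * u / ρ) * Real.cos (z.re * u / ρ) - 1 + z.im * u / ρ) * u ^ (-1 - α) := by
  simp only [levyIntegrand, Complex.mul_re, Complex.ofReal_re, Complex.ofReal_im,
    Complex.sub_re, Complex.sub_im, Complex.one_re, Complex.one_im, Complex.div_ofReal_re,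
    Complex.div_ofReal_im, Complex.exp_re, Complex.exp_im, Complex.mul_im, Complex.I_re,
    Complex.I_im]
  ring_nf

lemma levyIntegrand_neg_I_mul_ofReal (α ρ ξ u : ℝ) :
    levyIntegrand α ρ (-Complex.I * ξ) u =
      (((Real.exp (ξ * u / ρ) - 1 - ξ * u / ρ) * u ^ (-1 - α) : ℝ) : ℂ) := by
  have hw : Complex.I * (-Complex.I * ξ) * u / ρ = ((ξ * u / ρ : ℝ) : ℂ) := by
    rw [show Complex.I * (-Complex.I * ξ) = -(Complex.I * Complex.I) * ξ by ring,
      Complex.I_mul_I]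
    push_cast
    ring
  rw [levyIntegrand, hw]
  push_cast
  ring

lemma Real.exp_mul_cos_sub_one_sub_le {a : ℝ} (ha : 0 ≤ a) (b : ℝ) :
    Real.exp a * Real.cos b - 1 - a ≤ (Real.exp a - 1 - a) + (Real.cos b - 1) := by
  have : 0 ≤ (Real.exp a - 1) * (1 - Real.cos b) :=
    mul_nonneg (by linarith [Real.add_one_le_exp a]) (by linarith [Real.cos_le_one b])
  linarith

lemma re_levyIntegrand_sub_I_mul_le (α : ℝ) {ρ ξ u : ℝ} (hρ : 0 ≤ ρ) (hξ : 0 ≤ ξ) (hu : 0 ≤ u)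
    (t : ℝ) :
    (levyIntegrand α ρ (t - Complex.I * ξ) u).re ≤
      (levyIntegrand α ρ (-Complex.I * ξ) u).re + (levyIntegrand α ρ t u).re := by
  have key := Real.exp_mul_cos_sub_one_sub_le (a := ξ * u / ρ) (by positivity) (t * u / ρ)
  simp only [re_levyIntegrand, Complex.sub_re, Complex.sub_im, Complex.mul_re, Complex.mul_im,
    Complex.neg_re, Complex.neg_im, Complex.ofReal_re, Complex.ofReal_im, Complex.I_re,
    Complex.I_im]
  norm_num [neg_div]
  rw [← add_mul]
  exact mul_le_mul_of_nonneg_right (by linarith) (Real.rpow_nonneg hu _)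

lemma norm_chiC (d : ℕ) {γ : ℝ} (hγ : (d : ℝ) / γ < 2) (r : ℝ) (z : ℂ) :
    ‖chiC d γ r z‖ = Real.exp ((2 - (d : ℝ) / γ) * r ^ d *
      ∫ u in (0 : ℝ)..1, (levyIntegrand (d / γ) (rho d r) z u).re) := by
  rw [chiC_eq_exp_integral, Complex.norm_exp, Complex.re_ofReal_mul]
  congr 2
  exact (intervalIntegral.intervalIntegral_re (intervalIntegrable_levyIntegrand hγ _ z)).symm

theorem chi_shift_down_general (d : ℕ) (γ : ℝ) (hγ : (d : ℝ) < γ)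
    (r : ℝ) (hr : 1 ≤ r) (ξ : ℝ) (hξ : 0 < ξ) (t : ℝ) :
    chiC d γ r (-(Complex.I) * (ξ : ℂ)) =
      ((Real.exp ((2 - (d : ℝ) / γ) * r ^ d *
        ∫ u in (0:ℝ)..1,
          (Real.exp (ξ * u / rho d r) - 1 - ξ * u / rho d r) *
            u ^ (-1 - (d : ℝ) / γ)) : ℝ) : ℂ) ∧
    ‖chiC d γ r ((t : ℂ) - Complex.I * (ξ : ℂ))‖ ≤
      Real.exp ((2 - (d : ℝ) / γ) * r ^ d *
        ∫ u in (0:ℝ)..1,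
          (Real.exp (ξ * u / rho d r) - 1 - ξ * u / rho d r) *
            u ^ (-1 - (d : ℝ) / γ)) *
      ‖chiC d γ r (t : ℂ)‖ := by
  have hα : (d : ℝ) / γ < 2 :=
    ((div_lt_one (d.cast_nonneg.trans_lt hγ)).2 hγ).trans one_lt_two
  have hc : 0 ≤ (2 - (d : ℝ) / γ) * r ^ d := mul_nonneg (by linarith) (by positivity)
  have hρ : 0 ≤ rho d r := Real.rpow_nonneg (by linarith) _
  have hre (z : ℂ) :
      IntervalIntegrable (fun u => (levyIntegrand (d / γ) (rho d r) z u).re) volume 0 1 :=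
    have hL := intervalIntegrable_levyIntegrand hα (rho d r) z
    ⟨hL.1.re, hL.2.re⟩
  refine ⟨?_, ?_⟩
  · simp_rw [chiC_eq_exp_integral, levyIntegrand_neg_I_mul_ofReal,
      intervalIntegral.integral_ofReal, ← Complex.ofReal_mul, Complex.ofReal_exp]
  · have hχξ := norm_chiC d hα r (-Complex.I * ξ)
    simp only [levyIntegrand_neg_I_mul_ofReal, Complex.ofReal_re] at hχξ
    rw [← hχξ, norm_chiC d hα, norm_chiC d hα, norm_chiC d hα, ← Real.exp_add, ← mul_add,
      ← intervalIntegral.integral_add (hre _) (hre _)]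
    gcongr
    exact intervalIntegral.integral_mono_on zero_le_one (hre _) ((hre _).add (hre _))
      fun u hu => re_levyIntegrand_sub_I_mul_le _ hρ hξ.le hu.1 t

/-- Lemma 2.3(i): |χ(t − iξ)| ≤ χ(−iξ)·|χ(t)| for ξ > 0, where χ(−iξ) is the positive real
number exp( d₁ r^d ∫₀¹ (e^{ξu/r^{d/2}} − 1 − ξu/r^{d/2}) u^{−1−d/γ} du ). -/
theorem chi_shift_down (d : ℕ) (hd : 1 ≤ d) (γ : ℝ) (hγ : (d : ℝ) < γ)
    (r : ℝ) (hr : 1 ≤ r) (ξ : ℝ) (hξ : 0 < ξ) (t : ℝ) :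
    chiC d γ r (-(Complex.I) * (ξ : ℂ)) =
      ((Real.exp ((2 - (d : ℝ) / γ) * r ^ d *
        ∫ u in (0:ℝ)..1,
          (Real.exp (ξ * u / rho d r) - 1 - ξ * u / rho d r) *
            u ^ (-1 - (d : ℝ) / γ)) : ℝ) : ℂ) ∧
    ‖chiC d γ r ((t : ℂ) - Complex.I * (ξ : ℂ))‖ ≤
      Real.exp ((2 - (d : ℝ) / γ) * r ^ d *
        ∫ u in (0:ℝ)..1,
          (Real.exp (ξ * u / rho d r) - 1 - ξ * u / rho d r) *
            u ^ (-1 - (d : ℝ) / γ)) *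
      ‖chiC d γ r (t : ℂ)‖ :=
  chi_shift_down_general d γ hγ r hr ξ hξ t
end
end

section
/- For every ζ > 0 and every real t, one has |χ(t + iζ)| ≤ χ(iζ) · |χ(t)|^{exp(−ζ/r^{d/2})}, where χ(iζ) = exp( d₁ r^d ∫₀¹ (e^{−ζu/r^{d/2}} − 1 + ζu/r^{d/2}) u^{−1−d/γ} du ) is a positive real number. (Lemma 2.3(ii).) -/
/-!
Write `χ(z) = exp (c ∫₀¹ F z u du)` with `c = d₁ r^d ≥ 0`, `ρ = r^{d/2}`, `p = -1 - d/γ`. At `z = iζ` the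
integrand `F (iζ) u = (e^{-ζu/ρ} - 1 + ζu/ρ) u^p` is real. For the bound, `|χ(z)| = exp (c ∫ Re F z)`,
and pointwise on `[0, 1]`
`Re F (t + iζ) - Re F (iζ) - e^{-ζ/ρ} Re F t = (e^{-ζu/ρ} - e^{-ζ/ρ}) (cos (tu/ρ) - 1) u^p ≤ 0`,
since `e^{-ζu/ρ} ≥ e^{-ζ/ρ}` for `u ≤ 1`. Integrability near `0` comes from
`|e^w - 1 - w| ≤ |w|² e^{|w|}`, so `|F z u| = O(u^{p+2})`.
-/

open MeasureTheory

noncomputable section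

lemma Complex.norm_exp_ofReal_mul_intervalIntegral {f : ℝ → ℂ} {a b : ℝ}
    (hf : IntervalIntegrable f volume a b) (c : ℝ) :
    ‖Complex.exp (c * ∫ x in a..b, f x)‖ = Real.exp (c * ∫ x in a..b, (f x).re) := by
  rw [Complex.norm_exp, Complex.re_ofReal_mul, ← Complex.reCLM_apply,
    ← Complex.reCLM.intervalIntegral_comp_comm hf]
  rfl

def chiIntegrand (ρ p : ℝ) (z : ℂ) (u : ℝ) : ℂ :=
  (Complex.exp (Complex.I * z * u / ρ) - 1 - Complex.I * z * u / ρ) * ((u ^ p : ℝ) : ℂ)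

theorem chiC_eq (d : ℕ) (γ r : ℝ) (z : ℂ) :
    chiC d γ r z = Complex.exp ((((2 - (d : ℝ) / γ) * r ^ d : ℝ) : ℂ) *
      ∫ u in (0 : ℝ)..1, chiIntegrand (rho d r) (-1 - (d : ℝ) / γ) z u) :=
  rfl

lemma norm_chiIntegrand_le {ρ : ℝ} (hρ : 0 < ρ) (p : ℝ) (z : ℂ) {u : ℝ} (hu : u ∈ Set.Ioc 0 1) :
    ‖chiIntegrand ρ p z u‖ ≤ (‖z‖ / ρ) ^ 2 * Real.exp (‖z‖ / ρ) * u ^ (p + 2) := by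
  obtain ⟨hu0, hu1⟩ := hu
  set w : ℂ := Complex.I * z * u / ρ
  have hw : ‖w‖ = ‖z‖ / ρ * u := by
    simp [w, abs_of_pos hu0, abs_of_pos hρ]; ring
  have hwM : ‖w‖ ≤ ‖z‖ / ρ := by
    rw [hw]; exact mul_le_of_le_one_right (by positivity) hu1
  have hTaylor : ‖Complex.exp w - 1 - w‖ ≤ ‖w‖ ^ 2 * Real.exp ‖w‖ := by
    simpa [Finset.sum_range_succ, sub_sub] using Complex.norm_exp_sub_sum_le_norm_mul_exp w 2
  calc ‖chiIntegrand ρ p z u‖ = ‖Complex.exp w - 1 - w‖ * u ^ p := by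
        rw [chiIntegrand, norm_mul, Complex.norm_real, Real.norm_of_nonneg (by positivity)]
    _ ≤ ‖w‖ ^ 2 * Real.exp (‖z‖ / ρ) * u ^ p := by
        gcongr
        exact hTaylor.trans (by gcongr)
    _ = (‖z‖ / ρ) ^ 2 * Real.exp (‖z‖ / ρ) * u ^ (p + 2) := by
        rw [hw, Real.rpow_add hu0, Real.rpow_two]; ring

lemma intervalIntegrable_chiIntegrand {ρ p : ℝ} (hρ : 0 < ρ) (hp : -3 < p) (z : ℂ) :
    IntervalIntegrable (chiIntegrand ρ p z) volume 0 1 := by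
  refine ((intervalIntegral.intervalIntegrable_rpow' (r := p + 2) (by linarith)).const_mul
    ((‖z‖ / ρ) ^ 2 * Real.exp (‖z‖ / ρ))).mono_fun ?_ ?_
  · unfold chiIntegrand
    fun_prop
  · rw [Set.uIoc_of_le zero_le_one]
    filter_upwards [ae_restrict_mem measurableSet_Ioc] with u hu
    exact (norm_chiIntegrand_le hρ p z hu).trans (le_abs_self _)

lemma chiIntegrand_re (ρ p : ℝ) (z : ℂ) (u : ℝ) :
    (chiIntegrand ρ p z u).re =
      (Real.exp (-(z.im * u / ρ)) * Real.cos (z.re * u / ρ) - 1 + z.im * u / ρ) * u ^ p := by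
  simp only [chiIntegrand, Complex.sub_re, Complex.exp_re,
    Complex.div_ofReal_re, Complex.div_ofReal_im, Complex.mul_re, Complex.mul_im,
    Complex.I_re, Complex.I_im, Complex.ofReal_re, Complex.ofReal_im, Complex.one_re]
  ring_nf

lemma chiIntegrand_I_mul (ρ p ζ u : ℝ) :
    chiIntegrand ρ p (Complex.I * ζ) u =
      (((Real.exp (-ζ * u / ρ) - 1 + ζ * u / ρ) * u ^ p : ℝ) : ℂ) := by
  have hw : Complex.I * (Complex.I * ζ) * u / ρ = ((-ζ * u / ρ : ℝ) : ℂ) := by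
    rw [← mul_assoc, Complex.I_mul_I]; push_cast; ring
  rw [chiIntegrand, hw, ← Complex.ofReal_exp]
  push_cast
  ring

lemma chiIntegrand_re_add_I_mul_le {ρ : ℝ} (hρ : 0 < ρ) (p t : ℝ) {ζ u : ℝ} (hζ : 0 ≤ ζ)
    (hu : u ∈ Set.Icc (0 : ℝ) 1) :
    (chiIntegrand ρ p (t + Complex.I * ζ) u).re ≤
      (chiIntegrand ρ p (Complex.I * ζ) u).re + Real.exp (-ζ / ρ) * (chiIntegrand ρ p t u).re := by
  obtain ⟨hu0, hu1⟩ := hu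
  simp only [chiIntegrand_re, Complex.add_re, Complex.add_im, Complex.ofReal_re,
    Complex.ofReal_im, Complex.mul_re, Complex.mul_im, Complex.I_re, Complex.I_im, mul_zero,
    zero_mul, one_mul, sub_zero, add_zero, zero_add, zero_div, neg_zero, Real.exp_zero, Real.cos_zero]
  have hdamp : Real.exp (-ζ / ρ) ≤ Real.exp (-(ζ * u / ρ)) := by
    rw [Real.exp_le_exp, neg_div, neg_le_neg_iff]
    exact div_le_div_of_nonneg_right (mul_le_of_le_one_right hζ hu1) hρ.le
  have hcos := Real.cos_le_one (t * u / ρ)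
  have hgap :
      0 ≤ (Real.exp (-(ζ * u / ρ)) - Real.exp (-ζ / ρ)) * (1 - Real.cos (t * u / ρ)) * u ^ p :=
    mul_nonneg (mul_nonneg (by linarith) (by linarith)) (Real.rpow_nonneg hu0 p)
  linear_combination hgap

lemma integral_chiIntegrand_re_add_I_mul_le {ρ p : ℝ} (hρ : 0 < ρ) (hp : -3 < p) (t : ℝ) {ζ : ℝ}
    (hζ : 0 ≤ ζ) :
    ∫ u in (0 : ℝ)..1, (chiIntegrand ρ p (t + Complex.I * ζ) u).re ≤
      (∫ u in (0 : ℝ)..1, (chiIntegrand ρ p (Complex.I * ζ) u).re) +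
        Real.exp (-ζ / ρ) * ∫ u in (0 : ℝ)..1, (chiIntegrand ρ p t u).re := by
  have hre (z : ℂ) : IntervalIntegrable (fun u ↦ (chiIntegrand ρ p z u).re) volume 0 1 :=
    have hz := intervalIntegrable_chiIntegrand hρ hp z
    ⟨hz.1.re, hz.2.re⟩
  rw [← intervalIntegral.integral_const_mul,
    ← intervalIntegral.integral_add (hre _) ((hre _).const_mul _)]
  exact intervalIntegral.integral_mono_on zero_le_one (hre _) ((hre _).add ((hre _).const_mul _))
    fun u hu ↦ chiIntegrand_re_add_I_mul_le hρ p t hζ hu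

theorem chi_shift_up_general (d : ℕ) (γ : ℝ) (hγ : (d : ℝ) < γ)
    (r : ℝ) (hr : 1 ≤ r) (ζ : ℝ) (hζ : 0 < ζ) (t : ℝ) :
    chiC d γ r (Complex.I * (ζ : ℂ)) =
      ((Real.exp ((2 - (d : ℝ) / γ) * r ^ d *
        ∫ u in (0:ℝ)..1,
          (Real.exp (-ζ * u / rho d r) - 1 + ζ * u / rho d r) *
            u ^ (-1 - (d : ℝ) / γ)) : ℝ) : ℂ) ∧
    ‖chiC d γ r ((t : ℂ) + Complex.I * (ζ : ℂ))‖ ≤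
      Real.exp ((2 - (d : ℝ) / γ) * r ^ d *
        ∫ u in (0:ℝ)..1,
          (Real.exp (-ζ * u / rho d r) - 1 + ζ * u / rho d r) *
            u ^ (-1 - (d : ℝ) / γ)) *
      ‖chiC d γ r (t : ℂ)‖ ^ Real.exp (-ζ / rho d r) := by
  have hρ : 0 < rho d r := Real.rpow_pos_of_pos (by linarith) _
  have hdγ : (d : ℝ) / γ < 1 := (div_lt_one ((Nat.cast_nonneg d).trans_lt hγ)).2 hγ
  have hp : (-3 : ℝ) < -1 - d / γ := by linarith
  have hc : 0 ≤ (2 - (d : ℝ) / γ) * r ^ d := mul_nonneg (by linarith) (by positivity)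
  have hχI : ∫ u in (0 : ℝ)..1, chiIntegrand (rho d r) (-1 - d / γ) (Complex.I * ζ) u =
      ((∫ u in (0 : ℝ)..1, (Real.exp (-ζ * u / rho d r) - 1 + ζ * u / rho d r) *
        u ^ (-1 - (d : ℝ) / γ) : ℝ) : ℂ) := by
    simp_rw [chiIntegrand_I_mul, intervalIntegral.integral_ofReal]
  refine ⟨?_, ?_⟩
  · rw [chiC_eq, hχI, ← Complex.ofReal_mul, Complex.ofReal_exp]
  · have hχIre : ∫ u in (0 : ℝ)..1, (chiIntegrand (rho d r) (-1 - d / γ) (Complex.I * ζ) u).re =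
        ∫ u in (0 : ℝ)..1, (Real.exp (-ζ * u / rho d r) - 1 + ζ * u / rho d r) *
          u ^ (-1 - (d : ℝ) / γ) := by
      simp_rw [chiIntegrand_I_mul, Complex.ofReal_re]
    simp_rw [chiC_eq, Complex.norm_exp_ofReal_mul_intervalIntegral
      (intervalIntegrable_chiIntegrand hρ hp _), ← Real.exp_mul, ← Real.exp_add, Real.exp_le_exp,
      ← hχIre]
    have hscaled :=
      mul_le_mul_of_nonneg_left (integral_chiIntegrand_re_add_I_mul_le hρ hp t hζ.le) hc
    linarith

/-- Lemma 2.3(ii): |χ(t + iζ)| ≤ χ(iζ)·|χ(t)|^{exp(−ζ/r^{d/2})} for ζ > 0, where χ(iζ) is the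
positive real number exp( d₁ r^d ∫₀¹ (e^{−ζu/r^{d/2}} − 1 + ζu/r^{d/2}) u^{−1−d/γ} du ). -/
theorem chi_shift_up (d : ℕ) (hd : 1 ≤ d) (γ : ℝ) (hγ : (d : ℝ) < γ)
    (r : ℝ) (hr : 1 ≤ r) (ζ : ℝ) (hζ : 0 < ζ) (t : ℝ) :
    chiC d γ r (Complex.I * (ζ : ℂ)) =
      ((Real.exp ((2 - (d : ℝ) / γ) * r ^ d *
        ∫ u in (0:ℝ)..1,
          (Real.exp (-ζ * u / rho d r) - 1 + ζ * u / rho d r) *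
            u ^ (-1 - (d : ℝ) / γ)) : ℝ) : ℂ) ∧
    ‖chiC d γ r ((t : ℂ) + Complex.I * (ζ : ℂ))‖ ≤
      Real.exp ((2 - (d : ℝ) / γ) * r ^ d *
        ∫ u in (0:ℝ)..1,
          (Real.exp (-ζ * u / rho d r) - 1 + ζ * u / rho d r) *
            u ^ (-1 - (d : ℝ) / γ)) *
      ‖chiC d γ r (t : ℂ)‖ ^ Real.exp (-ζ / rho d r) :=
  chi_shift_up_general d γ hγ r hr ζ hζ t
end
end

section
/- For every real ξ, every real r ≥ 1, every integer k ≥ 1, and all integers 1 ≤ ℓ ≤ j, one has c̃_{j,ℓ} ≤ (κ̃₃)^ℓ ℓ^j / (ℓ! j!). (Lemma 3.2.) -/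
open MeasureTheory Finset

noncomputable section

/-- tilted cumulant coefficients κ̃_n = d₁ ∫₀¹ e^{ξu/ρ} u^{n-1-d/γ} du -/
def kt (d : ℕ) (γ r ξ : ℝ) (n : ℕ) : ℝ :=
  (2 - (d : ℝ) / γ) *
    ∫ u in (0:ℝ)..1, Real.exp (ξ * u / rho d r) * u ^ ((n : ℝ) - 1 - (d : ℝ) / γ)

/-- c̃_{j,ℓ} = (1/ℓ!) ∑_{3 ≤ nᵢ ≤ k+2, ∑(nᵢ−2)=j} ∏ᵢ κ̃_{nᵢ}/nᵢ! -/
def ctilde (d : ℕ) (γ r ξ : ℝ) (k j l : ℕ) : ℝ :=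
  (1 / (l.factorial : ℝ)) *
    ∑ n ∈ (Fintype.piFinset fun _ : Fin l => Finset.Icc 3 (k + 2)).filter
        (fun n => ∑ i, (n i - 2) = j),
      ∏ i, kt d γ r ξ (n i) / ((n i).factorial : ℝ)

lemma sum_multinomial_piAntidiag (l j : ℕ) :
    ∑ m ∈ Finset.piAntidiag (Finset.univ : Finset (Fin l)) j,
      Nat.multinomial Finset.univ m = l ^ j := by
  have h := Finset.sum_pow_eq_sum_piAntidiag (Finset.univ : Finset (Fin l)) (fun _ => (1:ℕ)) j
  simpa using h.symm

lemma kt_integrand_contOn (d : ℕ) (r ξ : ℝ) {e : ℝ} (he : 0 < e) :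
    ContinuousOn (fun u : ℝ => Real.exp (ξ * u / rho d r) * u ^ e) (Set.Icc 0 1) := by
  apply ContinuousOn.mul
  · exact ((Real.continuous_exp.comp ((continuous_const.mul continuous_id).div_const _)).continuousOn)
  · exact ContinuousOn.rpow_const continuousOn_id (fun x _ => Or.inr he.le)

lemma kt_nonneg (d : ℕ) (hd : 1 ≤ d) {γ : ℝ} (hγ : (d : ℝ) < γ) (r ξ : ℝ)
    {n : ℕ} (hn : 3 ≤ n) : 0 ≤ kt d γ r ξ n := by
  have hγ0 : (0:ℝ) < γ := lt_of_le_of_lt (by exact_mod_cast Nat.zero_le d) hγ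
  have hc1 : (d : ℝ) / γ < 1 := (div_lt_one hγ0).mpr hγ
  have hc0 : 0 ≤ (d : ℝ) / γ := div_nonneg (by positivity) hγ0.le
  apply mul_nonneg (by linarith)
  apply intervalIntegral.integral_nonneg zero_le_one
  intro u hu
  exact mul_nonneg (Real.exp_nonneg _) (Real.rpow_nonneg hu.1 _)

lemma kt_le_kt3 (d : ℕ) (hd : 1 ≤ d) {γ : ℝ} (hγ : (d : ℝ) < γ) (r ξ : ℝ)
    {n : ℕ} (hn : 3 ≤ n) : kt d γ r ξ n ≤ kt d γ r ξ 3 := by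
  have hγ0 : (0:ℝ) < γ := lt_of_le_of_lt (by exact_mod_cast Nat.zero_le d) hγ
  have hc1 : (d : ℝ) / γ < 1 := (div_lt_one hγ0).mpr hγ
  have hc0 : 0 ≤ (d : ℝ) / γ := div_nonneg (by positivity) hγ0.le
  have hen : (0:ℝ) < (n : ℝ) - 1 - (d : ℝ) / γ := by
    have : (3:ℝ) ≤ (n:ℝ) := by exact_mod_cast hn
    linarith
  have he3 : (0:ℝ) < ((3:ℕ) : ℝ) - 1 - (d : ℝ) / γ := by
    push_cast; linarith
  apply mul_le_mul_of_nonneg_left _ (by linarith)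
  apply intervalIntegral.integral_mono_on zero_le_one
  · exact ContinuousOn.intervalIntegrable
      (by rw [Set.uIcc_of_le zero_le_one]; exact kt_integrand_contOn d r ξ hen)
  · exact ContinuousOn.intervalIntegrable
      (by rw [Set.uIcc_of_le zero_le_one]; exact kt_integrand_contOn d r ξ he3)
  · intro u hu
    apply mul_le_mul_of_nonneg_left _ (Real.exp_nonneg _)
    rcases eq_or_lt_of_le hu.1 with h0 | h0
    · rw [← h0, Real.zero_rpow hen.ne', Real.zero_rpow he3.ne']
    · apply Real.rpow_le_rpow_of_exponent_ge h0 hu.2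
      have : (3:ℝ) ≤ (n:ℝ) := by exact_mod_cast hn
      push_cast
      linarith

theorem ctilde_upper_bound_aux (d : ℕ) (hd : 1 ≤ d) (γ : ℝ) (hγ : (d : ℝ) < γ)
    (ξ : ℝ) (r : ℝ) (hr : 1 ≤ r) (k : ℕ) (hk : 1 ≤ k)
    (j l : ℕ) (hl : 1 ≤ l) (hlj : l ≤ j) :
    (1 / (l.factorial : ℝ)) *
      ∑ n ∈ (Fintype.piFinset fun _ : Fin l => Finset.Icc 3 (k + 2)).filter
          (fun n => ∑ i, (n i - 2) = j),
        ∏ i, kt d γ r ξ (n i) / ((n i).factorial : ℝ) ≤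
      (kt d γ r ξ 3) ^ l * (l : ℝ) ^ j / ((l.factorial : ℝ) * (j.factorial : ℝ)) := by
  set K : ℕ → ℝ := kt d γ r ξ with hK
  set S := (Fintype.piFinset fun _ : Fin l => Finset.Icc 3 (k + 2)).filter
      (fun n => ∑ i, (n i - 2) = j) with hS
  have hK3 : 0 ≤ K 3 := kt_nonneg d hd hγ r ξ le_rfl
  -- term bound
  have hterm : ∀ n ∈ S, (∏ i, K (n i) / ((n i).factorial : ℝ)) ≤
      K 3 ^ l * (Nat.multinomial Finset.univ (fun i => n i - 2) : ℝ) / (j.factorial : ℝ) := by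
    intro n hn
    obtain ⟨hmem, hsum⟩ := Finset.mem_filter.mp hn
    have hni : ∀ i, 3 ≤ n i := fun i => (Finset.mem_Icc.mp (Fintype.mem_piFinset.mp hmem i)).1
    have step1 : (∏ i, K (n i) / ((n i).factorial : ℝ)) ≤
        ∏ i, K 3 / (((n i - 2).factorial : ℕ) : ℝ) := by
      apply Finset.prod_le_prod
      · intro i _
        exact div_nonneg (kt_nonneg d hd hγ r ξ (hni i)) (by positivity)
      · intro i _
        apply div_le_div₀ hK3 (kt_le_kt3 d hd hγ r ξ (hni i)) (by positivity)
        exact_mod_cast Nat.factorial_le (Nat.sub_le _ _)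
    have hPM : ((∏ i, ((n i - 2).factorial : ℝ)) *
        (Nat.multinomial Finset.univ (fun i => n i - 2) : ℝ)) = (j.factorial : ℝ) := by
      have := Nat.multinomial_spec (Finset.univ : Finset (Fin l)) (fun i => n i - 2)
      rw [hsum] at this
      exact_mod_cast this
    have hMpos : (0:ℝ) < (Nat.multinomial Finset.univ (fun i => n i - 2) : ℝ) := by
      exact_mod_cast Nat.multinomial_pos _ _
    calc (∏ i, K (n i) / ((n i).factorial : ℝ)) ≤
        ∏ i, K 3 / (((n i - 2).factorial : ℕ) : ℝ) := step1
      _ = K 3 ^ l / ∏ i, (((n i - 2).factorial : ℕ) : ℝ) := by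
          rw [Finset.prod_div_distrib, Finset.prod_const, Finset.card_univ, Fintype.card_fin]
      _ = K 3 ^ l * (Nat.multinomial Finset.univ (fun i => n i - 2) : ℝ) / (j.factorial : ℝ) := by
          rw [div_eq_div_iff (by positivity) (by positivity), ← hPM]
          ring
  have hSub : S.sum (fun n => (Nat.multinomial Finset.univ (fun i => n i - 2) : ℕ)) ≤ l ^ j := by
    rw [← sum_multinomial_piAntidiag l j]
    have hinj : Set.InjOn (fun n : Fin l → ℕ => (fun i => n i - 2)) S := by
      intro a ha b hb hab
      obtain ⟨hma, _⟩ := Finset.mem_filter.mp ha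
      obtain ⟨hmb, _⟩ := Finset.mem_filter.mp hb
      funext i
      have h3a : 3 ≤ a i := (Finset.mem_Icc.mp (Fintype.mem_piFinset.mp hma i)).1
      have h3b : 3 ≤ b i := (Finset.mem_Icc.mp (Fintype.mem_piFinset.mp hmb i)).1
      have : a i - 2 = b i - 2 := congrFun hab i
      omega
    rw [← Finset.sum_image (fun a ha b hb hab => hinj ha hb hab)]
    apply Finset.sum_le_sum_of_subset
    intro m hm
    obtain ⟨n, hn, rfl⟩ := Finset.mem_image.mp hm
    obtain ⟨_, hsum⟩ := Finset.mem_filter.mp hn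
    simp only [Finset.mem_piAntidiag]
    exact ⟨hsum, fun i _ => Finset.mem_univ i⟩
  calc (1 / (l.factorial : ℝ)) * ∑ n ∈ S, ∏ i, K (n i) / ((n i).factorial : ℝ)
      ≤ (1 / (l.factorial : ℝ)) * ∑ n ∈ S,
        (K 3 ^ l * (Nat.multinomial Finset.univ (fun i => n i - 2) : ℝ) / (j.factorial : ℝ)) := by
        apply mul_le_mul_of_nonneg_left (Finset.sum_le_sum hterm) (by positivity)
    _ = (1 / (l.factorial : ℝ)) * (K 3 ^ l / (j.factorial : ℝ) *
        ∑ n ∈ S, (Nat.multinomial Finset.univ (fun i => n i - 2) : ℝ)) := by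
        simp only [Finset.mul_sum]
        exact Finset.sum_congr rfl fun n _ => by ring
    _ ≤ (1 / (l.factorial : ℝ)) * (K 3 ^ l / (j.factorial : ℝ) * (l : ℝ) ^ j) := by
        have : (∑ n ∈ S, (Nat.multinomial Finset.univ (fun i => n i - 2) : ℝ)) ≤ (l : ℝ) ^ j := by
          exact_mod_cast hSub
        have h0 : (0:ℝ) ≤ K 3 ^ l / (j.factorial : ℝ) := by positivity
        apply mul_le_mul_of_nonneg_left _ (by positivity)
        exact mul_le_mul_of_nonneg_left this h0
    _ = K 3 ^ l * (l : ℝ) ^ j / ((l.factorial : ℝ) * (j.factorial : ℝ)) := by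
        ring


/-- Lemma 3.2: c̃_{j,ℓ} ≤ κ̃₃^ℓ ℓ^j / (ℓ! j!). -/
theorem ctilde_upper_bound (d : ℕ) (hd : 1 ≤ d) (γ : ℝ) (hγ : (d : ℝ) < γ)
    (ξ : ℝ) (r : ℝ) (hr : 1 ≤ r) (k : ℕ) (hk : 1 ≤ k)
    (j l : ℕ) (hl : 1 ≤ l) (hlj : l ≤ j) :
    ctilde d γ r ξ k j l ≤
      (kt d γ r ξ 3) ^ l * (l : ℝ) ^ j / ((l.factorial : ℝ) * (j.factorial : ℝ)) := by
  unfold ctilde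
  exact ctilde_upper_bound_aux d hd γ hγ ξ r hr k hk j l hl hlj
end
end

section
/- There exists a constant c > 0, depending only on d and γ, such that for all r ≥ 1, all ξ ≥ 0, and all real t with |t| > ρ/2: |E(t)| ≤ exp( −c ρ^{d₁} |t|^{d/γ} ) · exp( −c ρ² √κ̃₂ ). (Lemma 3.5.) -/
open MeasureTheory Finset

noncomputable section

/-- E(t) = exp( d₁ ρ² ∫₀¹ e^{ξu/ρ} (e^{itu/ρ} − 1 − itu/ρ) u^{−1−d/γ} du ) -/
def Efun (d : ℕ) (γ r ξ : ℝ) (t : ℝ) : ℂ :=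
  Complex.exp ((((2 - (d : ℝ) / γ) * (rho d r) ^ 2 : ℝ) : ℂ) *
    ∫ u in (0:ℝ)..1,
      ((Real.exp (ξ * u / rho d r) : ℝ) : ℂ) *
        (Complex.exp (Complex.I * (t : ℂ) * (u : ℂ) / ((rho d r : ℝ) : ℂ)) - 1 -
          Complex.I * (t : ℂ) * (u : ℂ) / ((rho d r : ℝ) : ℂ)) *
        ((u ^ (-1 - (d : ℝ) / γ) : ℝ) : ℂ))

/-!
With `α = d/γ`, `θ = ξ/ρ` and `s = t/ρ` (so `|s| > 1/2`), `|E(t)| = exp (-d₁ ρ² J)` where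
`J = ∫₀¹ e^{θu} (1 - cos (su)) u^{-1-α} du`. Two pieces of `[0, 1]` bound `J` from below.
On `[1/(4|s|), 1/(2|s|)]` the phase `|su|` lies in `[1/4, 1/2]`, so `1 - cos (su)` is bounded
below while `u^{-1-α} ≍ |s|^{1+α}`, giving `J ≳ |s|^α`, i.e. `ρ² J ≳ ρ^{d₁} |t|^α`.
On `[1/2, 1]` the tilt is at least `e^{θ/2}` and the mean of `1 - cos (su)` is bounded below
because `|sin x| ≤ 8 sin (1/8) |x| < |x|` for `|x| ≥ 1/8`, giving `J ≳ e^{θ/2} ≥ √κ̃₂`, as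
`κ̃₂ ≤ e^θ`.
-/

open Real intervalIntegral

def tiltedCosIntegral (α θ s : ℝ) : ℝ :=
  ∫ u in (0:ℝ)..1, exp (θ * u) * (1 - cos (s * u)) * u ^ (-1 - α)

section

open Complex

def tiltedCharIntegrand (α θ s u : ℝ) : ℂ :=
  (Real.exp (θ * u) : ℂ) * (cexp (I * (s * u : ℝ)) - 1 - I * (s * u : ℝ)) * (u ^ (-1 - α) : ℝ)

theorem norm_cexp_I_mul_sub_one_sub_le (x : ℝ) : ‖cexp (I * x) - 1 - I * x‖ ≤ 2 * |x| :=
  calc ‖cexp (I * x) - 1 - I * x‖ ≤ ‖cexp (I * x) - 1‖ + ‖I * x‖ := norm_sub_le _ _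
    _ ≤ |x| + |x| := by
      gcongr
      · exact norm_exp_I_mul_ofReal_sub_one_le
      · simp
    _ = 2 * |x| := by ring

theorem re_tiltedCharIntegrand (α θ s u : ℝ) :
    (tiltedCharIntegrand α θ s u).re =
      -(Real.exp (θ * u) * (1 - Real.cos (s * u)) * u ^ (-1 - α)) := by
  simp only [tiltedCharIntegrand, mul_comm I, mul_re, sub_re, exp_ofReal_mul_I_re,
    one_re, ofReal_re, ofReal_im, I_re, I_im]
  ring

theorem intervalIntegrable_tiltedCharIntegrand {α : ℝ} (hα : α < 1) (θ s : ℝ) :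
    IntervalIntegrable (tiltedCharIntegrand α θ s) volume 0 1 := by
  have hdom : IntervalIntegrable (fun u : ℝ => 2 * |s| * Real.exp |θ| * u ^ (-α)) volume 0 1 :=
    (intervalIntegrable_rpow' (by linarith)).const_mul _
  refine hdom.mono_fun' (by unfold tiltedCharIntegrand; fun_prop) ?_
  rw [Set.uIoc_of_le zero_le_one]
  refine (ae_restrict_iff' measurableSet_Ioc).2
    (Filter.Eventually.of_forall fun u ⟨hu0, hu1⟩ => ?_)
  have hexp : Real.exp (θ * u) ≤ Real.exp |θ| :=
    Real.exp_le_exp.2 (by nlinarith [le_abs_self θ, abs_nonneg θ])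
  have hpow : u * u ^ (-1 - α) = u ^ (-α) := by
    rw [show -α = 1 + (-1 - α) by ring, rpow_add hu0, rpow_one]
  have hI := norm_cexp_I_mul_sub_one_sub_le (s * u)
  rw [abs_mul, abs_of_pos hu0] at hI
  simp only [tiltedCharIntegrand, norm_mul, norm_real, Real.norm_eq_abs,
    abs_of_pos (Real.exp_pos _), abs_of_nonneg (rpow_nonneg hu0.le _)]
  calc Real.exp (θ * u) * ‖cexp (I * (s * u : ℝ)) - 1 - I * (s * u : ℝ)‖ * u ^ (-1 - α)
      ≤ Real.exp |θ| * (2 * (|s| * u)) * u ^ (-1 - α) := by gcongr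
    _ = 2 * |s| * Real.exp |θ| * u ^ (-α) := by rw [← hpow]; ring

theorem intervalIntegrable_tiltedCos {α : ℝ} (hα : α < 1) (θ s : ℝ) :
    IntervalIntegrable (fun u => Real.exp (θ * u) * (1 - Real.cos (s * u)) * u ^ (-1 - α))
      volume 0 1 := by
  have h := intervalIntegrable_tiltedCharIntegrand hα θ s
  have hre : IntervalIntegrable (fun u => -(tiltedCharIntegrand α θ s u).re) volume 0 1 :=
    ⟨h.1.re.neg, h.2.re.neg⟩
  simpa only [re_tiltedCharIntegrand, neg_neg] using hre

theorem re_integral_tiltedCharIntegrand {α : ℝ} (hα : α < 1) (θ s : ℝ) :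
    (∫ u in (0:ℝ)..1, tiltedCharIntegrand α θ s u).re = -tiltedCosIntegral α θ s := by
  rw [← reCLM_apply,
    ← reCLM.intervalIntegral_comp_comm (intervalIntegrable_tiltedCharIntegrand hα θ s)]
  simp only [reCLM_apply, re_tiltedCharIntegrand, intervalIntegral.integral_neg, tiltedCosIntegral]

theorem norm_Efun {d : ℕ} {γ : ℝ} (hα : (d : ℝ) / γ < 1) (r ξ t : ℝ) :
    ‖Efun d γ r ξ t‖ = Real.exp (-((2 - (d : ℝ) / γ) * rho d r ^ 2 *
      tiltedCosIntegral ((d : ℝ) / γ) (ξ / rho d r) (t / rho d r))) := by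
  have hG : ∀ u : ℝ, tiltedCharIntegrand ((d : ℝ) / γ) (ξ / rho d r) (t / rho d r) u =
      (Real.exp (ξ * u / rho d r) : ℂ) *
        (cexp (I * t * u / (rho d r : ℂ)) - 1 - I * t * u / (rho d r : ℂ)) *
        (u ^ (-1 - (d : ℝ) / γ) : ℝ) := by
    intro u
    rw [tiltedCharIntegrand, div_mul_eq_mul_div, mul_div_right_comm ξ]
    push_cast
    ring_nf
  rw [Efun, norm_exp, ← integral_congr (fun u _ => hG u), re_ofReal_mul,
    re_integral_tiltedCharIntegrand hα]
  ring_nf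

end

theorem abs_sin_le_mul_abs_of_le_abs {y : ℝ} (hy : 1 / 8 ≤ |y|) :
    |sin y| ≤ 8 * sin (1 / 8) * |y| := by
  wlog hy0 : 0 ≤ y generalizing y
  · simpa [abs_neg] using this (y := -y) (by rwa [abs_neg]) (by linarith)
  rw [abs_of_nonneg hy0] at hy ⊢
  have hpos : 0 < 8 * y := by linarith
  have hjordan := mul_le_sin (x := 1 / 8) (by norm_num) (by linarith [pi_gt_three])
  rcases le_or_gt y π with hyπ | hyπ
  · have ha : 0 ≤ 1 - 1 / (8 * y) := by rw [sub_nonneg, div_le_one hpos]; linarith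
    have hb : 0 ≤ 1 / (8 * y) := by positivity
    have key := strictConcaveOn_sin_Icc.concaveOn.2 (⟨le_rfl, pi_pos.le⟩ : (0:ℝ) ∈ Set.Icc 0 π)
      (⟨hy0, hyπ⟩ : y ∈ Set.Icc 0 π) ha hb (by ring)
    have hby : 1 / (8 * y) * y = 1 / 8 := by field_simp
    simp only [smul_eq_mul, mul_zero, sin_zero, zero_add, hby] at key
    rw [abs_of_nonneg (sin_nonneg_of_nonneg_of_le_pi hy0 hyπ)]
    rw [div_mul_eq_mul_div, one_mul, div_le_iff₀ hpos] at key
    linarith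
  · have hsin : 0 ≤ sin (1 / 8) := (by positivity : (0:ℝ) ≤ 2 / π * (1 / 8)).trans hjordan
    calc |sin y| ≤ 1 := abs_sin_le_one y
      _ ≤ 8 * (2 / π * (1 / 8)) * π := by field_simp; norm_num
      _ ≤ 8 * sin (1 / 8) * y := by gcongr

theorem integral_one_sub_cos_mul (s : ℝ) (hs : s ≠ 0) :
    ∫ u in (1 / 2 : ℝ)..1, (1 - cos (s * u)) = 1 / 2 - (sin s - sin (s / 2)) / s := by
  rw [intervalIntegral.integral_sub intervalIntegrable_const
      ((by fun_prop : Continuous fun u => cos (s * u)).intervalIntegrable _ _),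
    integral_comp_mul_left (fun u => cos u) hs, integral_cos]
  simp only [intervalIntegral.integral_const, smul_eq_mul]
  field_simp
  ring_nf

theorem le_integral_one_sub_cos_mul {s : ℝ} (hs : 1 / 2 ≤ |s|) :
    (1 - 8 * sin (1 / 8)) / 2 ≤ ∫ u in (1 / 2 : ℝ)..1, (1 - cos (s * u)) := by
  have hs0 : 0 < |s| := by linarith
  rw [integral_one_sub_cos_mul s (abs_pos.1 hs0)]
  have hsin : |sin (s / 4)| ≤ 8 * sin (1 / 8) * |s / 4| :=
    abs_sin_le_mul_abs_of_le_abs (by rw [abs_div]; norm_num; linarith)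
  have hdiff : |sin s - sin (s / 2)| ≤ 4 * sin (1 / 8) * |s| := by
    rw [sin_sub_sin, show (s - s / 2) / 2 = s / 4 by ring, abs_mul, abs_mul, abs_two]
    rw [abs_div, abs_of_pos (by norm_num : (0:ℝ) < 4)] at hsin
    nlinarith [abs_cos_le_one ((s + s / 2) / 2), abs_nonneg (sin (s / 4)),
      abs_nonneg (cos ((s + s / 2) / 2))]
  have : (sin s - sin (s / 2)) / s ≤ 4 * sin (1 / 8) := by
    refine (le_abs_self _).trans ?_
    rw [abs_div, div_le_iff₀ hs0]
    exact hdiff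
  linarith

theorem integral_le_tiltedCosIntegral {α : ℝ} (hα : α < 1) (θ s : ℝ) {g : ℝ → ℝ} {a b : ℝ}
    (ha : 0 ≤ a) (hab : a ≤ b) (hb : b ≤ 1) (hg : IntervalIntegrable g volume a b)
    (hgf : ∀ u ∈ Set.Icc a b, g u ≤ exp (θ * u) * (1 - cos (s * u)) * u ^ (-1 - α)) :
    ∫ u in a..b, g u ≤ tiltedCosIntegral α θ s := by
  have hf := intervalIntegrable_tiltedCos hα θ s
  have hsub : Set.uIcc a b ⊆ Set.uIcc 0 1 := by
    rw [Set.uIcc_of_le hab, Set.uIcc_of_le zero_le_one]; exact Set.Icc_subset_Icc ha hb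
  refine (integral_mono_on hab hg (hf.mono_set hsub) hgf).trans
    (integral_mono_interval ha hab hb ?_ hf)
  refine (ae_restrict_iff' measurableSet_Ioc).2 (Filter.Eventually.of_forall fun u hu => ?_)
  have := Real.cos_le_one (s * u)
  have := rpow_nonneg hu.1.le (-1 - α)
  have := Real.exp_pos (θ * u)
  simp only [Pi.zero_apply]
  positivity

theorem mul_rpow_abs_le_tiltedCosIntegral {α θ s : ℝ} (hα0 : 0 ≤ α) (hα1 : α < 1) (hθ : 0 ≤ θ)
    (hs : 1 / 2 ≤ |s|) : 1 / (16 * π ^ 2) * |s| ^ α ≤ tiltedCosIntegral α θ s := by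
  set S := |s|
  have hS : 0 < S := by linarith
  have h2S : 0 < 2 * S := by positivity
  have hab : 1 / (4 * S) ≤ 1 / (2 * S) := by gcongr; linarith
  have hpt : ∀ u ∈ Set.Icc (1 / (4 * S)) (1 / (2 * S)), (2 * S) ^ (1 + α) / (8 * π ^ 2) ≤
      exp (θ * u) * (1 - cos (s * u)) * u ^ (-1 - α) := by
    rintro u ⟨hua, hub⟩
    have hu0 : 0 < u := lt_of_lt_of_le (by positivity) hua
    have hsu : |s * u| = S * u := by rw [abs_mul, abs_of_pos hu0]
    rw [div_le_iff₀ (by positivity)] at hua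
    rw [le_div_iff₀ h2S] at hub
    have hcos : 1 / (8 * π ^ 2) ≤ 1 - cos (s * u) := by
      have := cos_le_one_sub_mul_cos_sq (x := s * u) (by rw [hsu]; nlinarith [pi_gt_three])
      rw [← sq_abs (s * u), hsu] at this
      have : 1 / (8 * π ^ 2) ≤ 2 / π ^ 2 * (S * u) ^ 2 := by
        have h16 : 1 / 16 ≤ (S * u) ^ 2 := by nlinarith
        rw [div_mul_eq_mul_div, div_le_div_iff₀ (by positivity) (by positivity)]
        nlinarith [mul_le_mul_of_nonneg_right h16 (sq_nonneg π)]
      linarith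
    have hpow : (2 * S) ^ (1 + α) ≤ u ^ (-1 - α) := by
      calc (2 * S) ^ (1 + α) = (1 / (2 * S)) ^ (-1 - α) := by
            rw [one_div, inv_rpow h2S.le, ← rpow_neg h2S.le]; congr 1; ring
        _ ≤ u ^ (-1 - α) := rpow_le_rpow_of_nonpos hu0 (by rwa [le_div_iff₀ h2S]) (by linarith)
    calc (2 * S) ^ (1 + α) / (8 * π ^ 2) = 1 * (1 / (8 * π ^ 2)) * (2 * S) ^ (1 + α) := by ring
      _ ≤ exp (θ * u) * (1 - cos (s * u)) * u ^ (-1 - α) :=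
        mul_le_mul (mul_le_mul (Real.one_le_exp (by positivity)) hcos (by positivity)
          (Real.exp_pos _).le) hpow (by positivity)
          (mul_nonneg (Real.exp_pos _).le ((by positivity : (0:ℝ) ≤ 1 / (8 * π ^ 2)).trans hcos))
  calc 1 / (16 * π ^ 2) * S ^ α ≤ 1 / (16 * π ^ 2) * (2 * S) ^ α := by gcongr; linarith
    _ = ∫ _ in (1 / (4 * S))..(1 / (2 * S)), (2 * S) ^ (1 + α) / (8 * π ^ 2) := by
        rw [intervalIntegral.integral_const, smul_eq_mul, rpow_add h2S, rpow_one]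
        field_simp
        ring
    _ ≤ tiltedCosIntegral α θ s :=
        integral_le_tiltedCosIntegral hα1 θ s (by positivity) hab
          (by rw [div_le_one h2S]; linarith) intervalIntegrable_const hpt

theorem mul_exp_half_le_tiltedCosIntegral {α θ s : ℝ} (hα0 : -1 ≤ α) (hα1 : α < 1) (hθ : 0 ≤ θ)
    (hs : 1 / 2 ≤ |s|) :
    (1 - 8 * sin (1 / 8)) / 2 * exp (θ / 2) ≤ tiltedCosIntegral α θ s := by
  have hpt : ∀ u ∈ Set.Icc (1 / 2 : ℝ) 1, exp (θ / 2) * (1 - cos (s * u)) ≤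
      exp (θ * u) * (1 - cos (s * u)) * u ^ (-1 - α) := by
    rintro u ⟨hu2, hu1⟩
    have hcos : 0 ≤ 1 - cos (s * u) := by linarith [Real.cos_le_one (s * u)]
    have hexp : exp (θ / 2) ≤ exp (θ * u) := Real.exp_le_exp.2 (by nlinarith)
    have hpow : 1 ≤ u ^ (-1 - α) :=
      one_le_rpow_of_pos_of_le_one_of_nonpos (by linarith) hu1 (by linarith)
    calc exp (θ / 2) * (1 - cos (s * u))
        ≤ exp (θ * u) * (1 - cos (s * u)) * 1 := by rw [mul_one]; gcongr
      _ ≤ exp (θ * u) * (1 - cos (s * u)) * u ^ (-1 - α) := by gcongr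
  calc (1 - 8 * sin (1 / 8)) / 2 * exp (θ / 2)
      ≤ exp (θ / 2) * ∫ u in (1 / 2 : ℝ)..1, (1 - cos (s * u)) := by
        rw [mul_comm]; gcongr; exact le_integral_one_sub_cos_mul hs
    _ = ∫ u in (1 / 2 : ℝ)..1, exp (θ / 2) * (1 - cos (s * u)) :=
        (intervalIntegral.integral_const_mul _ _).symm
    _ ≤ tiltedCosIntegral α θ s :=
        integral_le_tiltedCosIntegral hα1 θ s (by norm_num) (by norm_num) le_rfl
          ((by fun_prop : Continuous fun u => exp (θ / 2) * (1 - cos (s * u))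
            ).intervalIntegrable _ _) hpt

theorem exists_pos_mul_le_tiltedCosIntegral :
    ∃ c > 0, ∀ α θ s : ℝ, 0 ≤ α → α < 1 → 0 ≤ θ → 1 / 2 ≤ |s| →
      c * (|s| ^ α + exp (θ / 2)) ≤ tiltedCosIntegral α θ s := by
  have hsin : 8 * sin (1 / 8) < 1 := by linarith [sin_lt (by norm_num : (0:ℝ) < 1 / 8)]
  set c₁ := 1 / (16 * π ^ 2)
  set c₂ := (1 - 8 * sin (1 / 8)) / 2
  refine ⟨min c₁ c₂ / 2, by positivity, fun α θ s hα0 hα1 hθ hs => ?_⟩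
  have hA : c₁ * |s| ^ α ≤ _ := mul_rpow_abs_le_tiltedCosIntegral hα0 hα1 hθ hs
  have hB : c₂ * exp (θ / 2) ≤ _ := mul_exp_half_le_tiltedCosIntegral (by linarith) hα1 hθ hs
  have h₁ := mul_le_mul_of_nonneg_right (min_le_left c₁ c₂) (rpow_nonneg (abs_nonneg s) α)
  have h₂ := mul_le_mul_of_nonneg_right (min_le_right c₁ c₂) (exp_pos (θ / 2)).le
  linarith

theorem integral_exp_mul_rpow_le {α θ : ℝ} (hα : α < 2) (hθ : 0 ≤ θ) :
    (2 - α) * ∫ u in (0:ℝ)..1, exp (θ * u) * u ^ (1 - α) ≤ exp θ := by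
  have hint : IntervalIntegrable (fun u : ℝ => u ^ (1 - α)) volume 0 1 :=
    intervalIntegrable_rpow' (by linarith)
  calc (2 - α) * ∫ u in (0:ℝ)..1, exp (θ * u) * u ^ (1 - α)
      ≤ (2 - α) * ∫ u in (0:ℝ)..1, exp θ * u ^ (1 - α) := by
        gcongr
        refine integral_mono_on zero_le_one
          (hint.continuousOn_mul (by fun_prop)) (hint.const_mul _) fun u hu => ?_
        gcongr
        · exact rpow_nonneg hu.1 _
        · nlinarith [hu.2]
    _ = exp θ := by
        rw [intervalIntegral.integral_const_mul, integral_rpow (Or.inl (by linarith)),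
          show 1 - α + 1 = 2 - α by ring]
        have : 2 - α ≠ 0 := by linarith
        simp [Real.zero_rpow this]
        field_simp

theorem sqrt_kt_two_le {d : ℕ} {γ : ℝ} (hα : (d : ℝ) / γ < 2) (r : ℝ) {ξ : ℝ}
    (hθ : 0 ≤ ξ / rho d r) : √(kt d γ r ξ 2) ≤ exp (ξ / rho d r / 2) := by
  have hkt : kt d γ r ξ 2 ≤ exp (ξ / rho d r) := by
    refine le_of_eq_of_le ?_ (integral_exp_mul_rpow_le hα hθ)
    rw [kt]
    congr 1
    refine integral_congr fun u _ => ?_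
    rw [div_mul_eq_mul_div, mul_div_right_comm ξ]
    norm_num
  rw [exp_half]
  exact Real.sqrt_le_sqrt hkt

theorem tail_bound_E_upper_general (d : ℕ) (γ : ℝ) (hγ : (d : ℝ) < γ) :
    ∃ c : ℝ, 0 < c ∧
      ∀ (r : ℝ), 1 ≤ r → ∀ ξ : ℝ, 0 ≤ ξ → ∀ t : ℝ, rho d r / 2 < |t| →
        ‖Efun d γ r ξ t‖ ≤
          Real.exp (-c * rho d r ^ (2 - (d : ℝ) / γ) * |t| ^ ((d : ℝ) / γ)) *
            Real.exp (-c * rho d r ^ 2 * Real.sqrt (kt d γ r ξ 2)) := by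
  obtain ⟨c, hc, hJ⟩ := exists_pos_mul_le_tiltedCosIntegral
  have hγ0 : 0 < γ := (Nat.cast_nonneg d).trans_lt hγ
  have hα1 : (d : ℝ) / γ < 1 := (div_lt_one hγ0).2 hγ
  refine ⟨c, hc, fun r hr ξ hξ t ht => ?_⟩
  set α := (d : ℝ) / γ
  set ρ := rho d r
  have hρ : 0 < ρ := rpow_pos_of_pos (by linarith) _
  have hθ : 0 ≤ ξ / ρ := div_nonneg hξ hρ.le
  have hs : 1 / 2 ≤ |t / ρ| := by
    rw [abs_div, abs_of_pos hρ, le_div_iff₀ hρ]; linarith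
  have hJ := hJ α (ξ / ρ) (t / ρ) (by positivity) hα1 hθ hs
  have hK := sqrt_kt_two_le (hα1.trans one_lt_two) r hθ
  have hscale : ρ ^ 2 * |t / ρ| ^ α = ρ ^ (2 - α) * |t| ^ α := by
    rw [abs_div, abs_of_pos hρ, div_rpow (abs_nonneg t) hρ.le, rpow_sub hρ, rpow_two]
    field_simp
  -- `d₁ ≥ 1`, so `d₁ ρ² J ≥ ρ² J ≥ c ρ² (|t/ρ|^α + e^{θ/2})`
  have hJ0 : 0 ≤ tiltedCosIntegral α (ξ / ρ) (t / ρ) := le_trans (by positivity) hJ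
  have h₁ := mul_le_mul_of_nonneg_left hJ (sq_nonneg ρ)
  have h₂ := mul_le_mul_of_nonneg_left hK (by positivity : 0 ≤ c * ρ ^ 2)
  have h₃ : 0 ≤ (1 - α) * ρ ^ 2 * tiltedCosIntegral α (ξ / ρ) (t / ρ) :=
    mul_nonneg (mul_nonneg (by linarith) (sq_nonneg ρ)) hJ0
  rw [norm_Efun hα1, ← Real.exp_add, Real.exp_le_exp]
  linear_combination h₁ + h₂ + h₃ - c * hscale

/-- Lemma 3.5 (upper tail): tail bound on |E(t)| for |t| > ρ/2. -/
theorem tail_bound_E_upper (d : ℕ) (hd : 1 ≤ d) (γ : ℝ) (hγ : (d : ℝ) < γ) :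
    ∃ c : ℝ, 0 < c ∧
      ∀ (r : ℝ), 1 ≤ r → ∀ ξ : ℝ, 0 ≤ ξ → ∀ t : ℝ, rho d r / 2 < |t| →
        ‖Efun d γ r ξ t‖ ≤
          Real.exp (-c * rho d r ^ (2 - (d : ℝ) / γ) * |t| ^ ((d : ℝ) / γ)) *
            Real.exp (-c * rho d r ^ 2 * Real.sqrt (kt d γ r ξ 2)) :=
  tail_bound_E_upper_general d γ hγ
end
end

section
/- Let β > 1, m > 0 and s > 2 m^{−β}. Set u_* = (s/2)^{−1/β} (so 0 < u_* < m), s₀ = s − m^{−β}, and define h(u) = (s − u^{−β})^{−1/β} for u ∈ [u_*, m]. Let μ be the Borel probability measure on [u_*, m] whose density is proportional to √(1 + h′(u)²), and let ν be the uniform probability measure on [s₀^{−1/β}, m]. Then μ stochastically dominates ν: for every x ∈ ℝ, μ([x, ∞)) ≥ ν([x, ∞)). (This is the n = 2 case of Proposition 4.2: the conditional law of the larger of two i.i.d. Uniform(0,m) variables U₁, U₂ given U₁^{−β} + U₂^{−β} = s — which is exactly μ, the projection of normalized arclength measure on the constraint curve — is stochastically larger than a Uniform(s₀^{−1/β}, m)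 variable.) -/
/-!
Write `g = √(1 + h'²)` for the unnormalized density of `μ`. Since `g ≥ 1`, the mass of
`[x, m]` is at least `m - x`. Since `h` is decreasing with `h(u_*) = u_*`, also `g ≤ 1 - h'`, so
the mass of `[u_*, x]` is at most `x - h(x) ≤ x - h(m) = x - s₀^{-1/β}`. Together these force the
tail ratio of `μ` at `x` to be at least `(m - x) / (m - s₀^{-1/β})`, the tail of the uniform law.
-/

open MeasureTheory Set

noncomputable section

theorem Set.Icc_inter_Ici {α : Type*} [LinearOrder α] (a b x : α) :
    Icc a b ∩ Ici x = Icc (max a x) b := by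
  ext u
  simp only [mem_inter_iff, mem_Icc, mem_Ici, max_le_iff]
  tauto

theorem Real.sqrt_one_add_sq_le_one_sub {d : ℝ} (hd : d ≤ 0) : √(1 + d ^ 2) ≤ 1 - d :=
  (Real.sqrt_le_left (by linarith)).2 (by nlinarith)

section IntegralsOverIcc

variable {g : ℝ → ℝ} {a b c : ℝ}

theorem setIntegral_Icc_add_setIntegral_Icc (hab : a ≤ b) (hbc : b ≤ c)
    (hg : IntegrableOn g (Icc a c)) :
    (∫ u in Icc a b, g u) + ∫ u in Icc b c, g u = ∫ u in Icc a c, g u := by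
  rw [integral_Icc_eq_integral_Ioc, integral_Icc_eq_integral_Ioc, integral_Icc_eq_integral_Ioc,
    ← Ioc_union_Ioc_eq_Ioc hab hbc, setIntegral_union (Ioc_disjoint_Ioc_of_le le_rfl)
    measurableSet_Ioc (hg.mono_set (Ioc_subset_Icc_self.trans (Icc_subset_Icc_right hbc)))
    (hg.mono_set (Ioc_subset_Icc_self.trans (Icc_subset_Icc_left hab)))]

theorem sub_le_setIntegral_Icc_of_one_le (hab : a ≤ b) (hg : IntegrableOn g (Icc a b))
    (hg1 : ∀ u ∈ Icc a b, 1 ≤ g u) : b - a ≤ ∫ u in Icc a b, g u := by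
  simpa [Real.volume_real_Icc_of_le hab] using
    setIntegral_ge_of_const_le_real measurableSet_Icc measure_Icc_lt_top.ne hg1 hg

/-- The graph of a nonincreasing function is no longer than the sum of its horizontal and vertical
extents. -/
theorem setIntegral_sqrt_one_add_deriv_sq_le {f : ℝ → ℝ} (hab : a ≤ b)
    (hdiff : ∀ u ∈ Icc a b, DifferentiableAt ℝ f u) (hcont : ContinuousOn (deriv f) (Icc a b))
    (hnonpos : ∀ u ∈ Icc a b, deriv f u ≤ 0) :
    ∫ u in Icc a b, √(1 + deriv f u ^ 2) ≤ (b - a) + (f a - f b) := by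
  have hFTC : ∫ u in Icc a b, (1 - deriv f u) = (b - a) + (f a - f b) := by
    rw [integral_Icc_eq_integral_Ioc, ← intervalIntegral.integral_of_le hab,
      intervalIntegral.integral_sub intervalIntegrable_const (hcont.intervalIntegrable_of_Icc hab),
      intervalIntegral.integral_deriv_eq_sub' f rfl (by rwa [uIcc_of_le hab])
        (by rwa [uIcc_of_le hab])]
    simp only [intervalIntegral.integral_const, smul_eq_mul, mul_one]
    ring
  calc ∫ u in Icc a b, √(1 + deriv f u ^ 2) ≤ ∫ u in Icc a b, (1 - deriv f u) :=
        setIntegral_mono_on (continuousOn_const.add (hcont.pow 2)).sqrt.integrableOn_Icc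
          (continuousOn_const.sub hcont).integrableOn_Icc measurableSet_Icc
          fun u hu => Real.sqrt_one_add_sq_le_one_sub (hnonpos u hu)
    _ = (b - a) + (f a - f b) := hFTC

end IntegralsOverIcc

section Domination

variable {g : ℝ → ℝ} {a c m : ℝ}

theorem div_le_setIntegral_Icc_div {x : ℝ} (hcx : c ≤ x) (hxm : x ≤ m)
    (hg : IntegrableOn g (Icc c m)) (hg1 : ∀ u ∈ Icc c m, 1 ≤ g u)
    (hcum : ∫ u in Icc c x, g u ≤ x - a) :
    (m - x) / (m - a) ≤ (∫ u in Icc x m, g u) / ∫ u in Icc c m, g u := by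
  rw [← setIntegral_Icc_add_setIntegral_Icc hcx hxm hg]
  set B := ∫ u in Icc c x, g u
  set N := ∫ u in Icc x m, g u
  have hB : 0 ≤ B := setIntegral_nonneg measurableSet_Icc fun u hu =>
    zero_le_one.trans (hg1 u ⟨hu.1, hu.2.trans hxm⟩)
  have hN : m - x ≤ N := sub_le_setIntegral_Icc_of_one_le hxm
    (hg.mono_set (Icc_subset_Icc_left hcx)) fun u hu => hg1 u ⟨hcx.trans hu.1, hu.2⟩
  rcases hxm.eq_or_lt with rfl | hxm
  · rw [sub_self, zero_div]
    exact div_nonneg (by linarith) (by linarith)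
  rw [div_le_div_iff₀ (by linarith) (by linarith)]
  -- `(m - x) B ≤ (m - x)(x - a) ≤ N (x - a)`
  nlinarith [mul_le_mul_of_nonneg_left hcum (sub_nonneg.2 hxm.le),
    mul_le_mul_of_nonneg_right hN (show 0 ≤ x - a by linarith)]

/-- Stochastic domination of the uniform law on `[a, m]` by the law with density proportional to
`g` on `[c, m]`. -/
theorem volume_real_Icc_inter_Ici_div_le (hcm : c < m) (hg : IntegrableOn g (Icc c m))
    (hg1 : ∀ u ∈ Icc c m, 1 ≤ g u) (hcum : ∀ y ∈ Icc c m, ∫ u in Icc c y, g u ≤ y - a)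
    (x : ℝ) :
    volume.real (Icc a m ∩ Ici x) / (m - a) ≤
      (∫ u in Icc c m ∩ Ici x, g u) / ∫ u in Icc c m, g u := by
  have hac : a ≤ c := by simpa using hcum c ⟨le_rfl, hcm.le⟩
  have hD : 0 < ∫ u in Icc c m, g u :=
    (sub_pos.2 hcm).trans_le (sub_le_setIntegral_Icc_of_one_le hcm.le hg hg1)
  rcases lt_or_ge x c with hxc | hcx
  · rw [inter_eq_left.2 (Icc_subset_Ici_self.trans (Ici_subset_Ici.2 hxc.le)), div_self hD.ne']
    refine div_le_one_of_le₀ ?_ (by linarith)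
    calc volume.real (Icc a m ∩ Ici x) ≤ volume.real (Icc a m) :=
          measureReal_mono inter_subset_left measure_Icc_lt_top.ne
      _ = m - a := Real.volume_real_Icc_of_le (by linarith)
  rcases le_or_gt x m with hxm | hmx
  · rw [Icc_inter_Ici, Icc_inter_Ici, max_eq_right hcx, max_eq_right (hac.trans hcx),
      Real.volume_real_Icc_of_le hxm]
    exact div_le_setIntegral_Icc_div hcx hxm hg hg1 (hcum x ⟨hcx, hxm⟩)
  · rw [Icc_inter_Ici, Icc_eq_empty (hmx.trans_le (le_max_right a x)).not_ge, measureReal_empty,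
      zero_div]
    exact div_nonneg (setIntegral_nonneg (measurableSet_Icc.inter measurableSet_Ici)
      fun u hu => zero_le_one.trans (hg1 u hu.1)) hD.le

end Domination

theorem Real.rpow_neg_one_div_rpow_neg {x β : ℝ} (hx : 0 ≤ x) (hβ : β ≠ 0) :
    (x ^ (-1 / β)) ^ (-β) = x := by
  rw [← Real.rpow_mul hx, show -1 / β * -β = 1 by field_simp, Real.rpow_one]

theorem Real.rpow_neg_rpow_neg_one_div {x β : ℝ} (hx : 0 ≤ x) (hβ : β ≠ 0) :
    (x ^ (-β)) ^ (-1 / β) = x := by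
  rw [← Real.rpow_mul hx, show -β * (-1 / β) = 1 by field_simp, Real.rpow_one]

/-- The smaller coordinate `h(u) = (s - u^{-β})^{-1/β}` of the point of the curve
`u₁^{-β} + u₂^{-β} = s` whose larger coordinate is `u`. -/
def constraintCurve (β s u : ℝ) : ℝ := (s - u ^ (-β)) ^ (-1 / β)

namespace constraintCurve

variable {β s : ℝ}

theorem pos_and_rpow_neg_lt_of_le (hβ : 0 < β) (hs : 0 < s) {u : ℝ}
    (hu : (s / 2) ^ (-1 / β) ≤ u) :
    0 < u ∧ u ^ (-β) < s := by
  have hc : 0 < (s / 2) ^ (-1 / β) := Real.rpow_pos_of_pos (by linarith) _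
  have hu' : u ^ (-β) ≤ ((s / 2) ^ (-1 / β)) ^ (-β) :=
    Real.rpow_le_rpow_of_nonpos hc hu (by linarith)
  rw [Real.rpow_neg_one_div_rpow_neg (by linarith) hβ.ne'] at hu'
  exact ⟨hc.trans_le hu, by linarith⟩

theorem hasDerivAt (hβ : β ≠ 0) {u : ℝ} (hu : 0 < u) (hsu : u ^ (-β) < s) :
    HasDerivAt (constraintCurve β s)
      (-(u ^ (-β - 1) * (s - u ^ (-β)) ^ (-1 / β - 1))) u := by
  have hinner : HasDerivAt (fun v : ℝ => s - v ^ (-β)) (-(-β * u ^ (-β - 1))) u :=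
    (Real.hasDerivAt_rpow_const (Or.inl hu.ne')).const_sub s
  unfold constraintCurve
  convert hinner.rpow_const (p := -1 / β) (Or.inl (sub_pos.2 hsu).ne') using 1
  field_simp

theorem differentiableAt (hβ : 0 < β) (hs : 0 < s) {u : ℝ}
    (hu : u ∈ Ici ((s / 2) ^ (-1 / β))) :
    DifferentiableAt ℝ (constraintCurve β s) u :=
  have h := pos_and_rpow_neg_lt_of_le hβ hs hu
  (hasDerivAt hβ.ne' h.1 h.2).differentiableAt

theorem deriv_nonpos (hβ : 0 < β) (hs : 0 < s) {u : ℝ}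
    (hu : u ∈ Ici ((s / 2) ^ (-1 / β))) :
    deriv (constraintCurve β s) u ≤ 0 := by
  obtain ⟨hu0, hsu⟩ := pos_and_rpow_neg_lt_of_le hβ hs hu
  rw [(hasDerivAt hβ.ne' hu0 hsu).deriv, neg_nonpos]
  exact mul_nonneg (Real.rpow_nonneg hu0.le _) (Real.rpow_nonneg (sub_pos.2 hsu).le _)

theorem continuousOn_deriv (hβ : 0 < β) (hs : 0 < s) :
    ContinuousOn (deriv (constraintCurve β s)) (Ici ((s / 2) ^ (-1 / β))) := by
  have hformula : ContinuousOn (fun v => -(v ^ (-β - 1) * (s - v ^ (-β)) ^ (-1 / β - 1)))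
      (Ici ((s / 2) ^ (-1 / β))) := fun u hu => by
    obtain ⟨hu0, hsu⟩ := pos_and_rpow_neg_lt_of_le hβ hs hu
    exact ((Real.continuousAt_rpow_const _ _ (Or.inl hu0.ne')).mul
      ((continuousAt_const.sub (Real.continuousAt_rpow_const _ _ (Or.inl hu0.ne'))).rpow_const
        (Or.inl (sub_pos.2 hsu).ne'))).neg.continuousWithinAt
  refine hformula.congr fun u hu => ?_
  obtain ⟨hu0, hsu⟩ := pos_and_rpow_neg_lt_of_le hβ hs hu
  exact (hasDerivAt hβ.ne' hu0 hsu).deriv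

theorem antitoneOn (hβ : 0 < β) (hs : 0 < s) :
    AntitoneOn (constraintCurve β s) (Ici ((s / 2) ^ (-1 / β))) :=
  antitoneOn_of_deriv_nonpos (convex_Ici _)
    (fun _ hu => (differentiableAt hβ hs hu).continuousAt.continuousWithinAt)
    (fun _ hu => (differentiableAt hβ hs (interior_subset hu)).differentiableWithinAt)
    fun _ hu => deriv_nonpos hβ hs (interior_subset hu)

theorem apply_rpow_neg_one_div_half (hβ : β ≠ 0) (hs : 0 ≤ s) :
    constraintCurve β s ((s / 2) ^ (-1 / β)) = (s / 2) ^ (-1 / β) := by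
  rw [constraintCurve, Real.rpow_neg_one_div_rpow_neg (by linarith) hβ, sub_half]

end constraintCurve

open constraintCurve in
/-- The n = 2 case of Proposition 4.2 (stochastic comparison): the projection μ of normalized
arclength measure on the constraint curve stochastically dominates the uniform measure ν on
[s₀^{−1/β}, m]: μ([x,∞)) ≥ ν([x,∞)) for all x. Here μ has density on [u_*, m] proportional to
√(1 + h′(u)²) with h(u) = (s − u^{−β})^{−1/β}, u_* = (s/2)^{−1/β}, s₀ = s − m^{−β}. -/
theorem stochastic_domination_two_points
    (β m s : ℝ) (hβ : 1 < β) (hm : 0 < m) (hs : 2 * m ^ (-β) < s) :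
    ∀ x : ℝ,
      (∫ u in Set.Icc ((s / 2) ^ (-1 / β)) m ∩ Set.Ici x,
          Real.sqrt (1 + (deriv (fun v : ℝ => (s - v ^ (-β)) ^ (-1 / β)) u) ^ 2)) /
        (∫ u in Set.Icc ((s / 2) ^ (-1 / β)) m,
          Real.sqrt (1 + (deriv (fun v : ℝ => (s - v ^ (-β)) ^ (-1 / β)) u) ^ 2)) ≥
      (volume (Set.Icc ((s - m ^ (-β)) ^ (-1 / β)) m ∩ Set.Ici x)).toReal /
        (m - (s - m ^ (-β)) ^ (-1 / β)) := by
  have hβ0 : 0 < β := by linarith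
  have hmβ : 0 < m ^ (-β) := Real.rpow_pos_of_pos hm _
  have hs0 : 0 < s := by linarith
  set c := (s / 2) ^ (-1 / β)
  have hcm : c < m :=
    calc c < (m ^ (-β)) ^ (-1 / β) :=
          Real.rpow_lt_rpow_of_neg hmβ (by linarith) (div_neg_of_neg_of_pos (by norm_num) hβ0)
      _ = m := Real.rpow_neg_rpow_neg_one_div hm.le hβ0.ne'
  have hcont := (continuousOn_deriv hβ0 hs0).mono (Icc_subset_Ici_self : Icc c m ⊆ Ici c)
  intro x
  refine volume_real_Icc_inter_Ici_div_le hcm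
    (continuousOn_const.add (hcont.pow 2)).sqrt.integrableOn_Icc
    (fun u _ => Real.one_le_sqrt.2 (le_add_of_nonneg_right (sq_nonneg _))) (fun y hy => ?_) x
  have hcy : Icc c y ⊆ Ici c := Icc_subset_Ici_self
  calc ∫ u in Icc c y, √(1 + deriv (constraintCurve β s) u ^ 2)
      ≤ (y - c) + (constraintCurve β s c - constraintCurve β s y) :=
        setIntegral_sqrt_one_add_deriv_sq_le hy.1 (fun u hu => differentiableAt hβ0 hs0 (hcy hu))
          ((continuousOn_deriv hβ0 hs0).mono hcy) fun u hu => deriv_nonpos hβ0 hs0 (hcy hu)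
    _ ≤ y - constraintCurve β s m := by
        rw [apply_rpow_neg_one_div_half hβ0.ne' hs0.le]
        linarith [antitoneOn hβ0 hs0 (mem_Ici.2 hy.1) (mem_Ici.2 hcm.le) hy.2]
end
end
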